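/- Let $T>0$, $H\in(\frac{1}{2},1)$, $\delta\in(0,\frac{1}{2})$ with $\delta<H$, $\epsilon>0$, $y\in\mathbb{R}$, $K_1,K_2,d_1,d_2\ge 0$. Let $b:\mathbb{R}\to\mathbb{R}$ be differentiable with $|b'|\le K_1$ and $|b'(u)-b'(v)|\le K_2|u-v|$; let $B:[0,T]\to\mathbb{R}$ be continuous with $B(0)=0$ and finite $(H-\delta)$-H\"older seminorm $\|B\|_{H-\delta}$; let $X:[0,T]\to\mathbb{R}$ satisfy $|X_t-X_s| \le d_1|t-s| + d_2\|B\|_\infty|t-s| + |B_t-B_s|$; set $X^\epsilon_t = X_t + \frac{T-t}{T}\epsilon y$ and $\eta_t = b(X_t)-b(X^\epsilon_t)-\frac{\epsilon}{T}y$. Define, for $s\in(0,T]$, $\Phi(s) = \frac{1}{\Gamma(\frac{3}{2}-H)}\Big(s^{\frac{1}{2}-H}\eta_s + (H-\tfrac{1}{2})s^{H-\frac{1}{2}}\int_0^s\frac{s^{\frac{1}{2}-H}-r^{\frac{1}{2}-H}}{(s-r)^{\frac{1}{2}+H}}\eta_r\,dr + (H-\tfrac{1}{2})\int_0^s\frac{\eta_s-\eta_r}{(s-r)^{\frac{1}{2}+H}}\,dr\Big)$.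 Then $|\Phi(s)| \le C_1\epsilon s^{\frac{1}{2}-H} + C_2\epsilon s^{\frac{3}{2}-H} + C_3\epsilon s^{\frac{3}{2}-H}\|B\|_\infty + C_4\epsilon s^{\frac{1}{2}-\delta}\|B\|_{H-\delta}$, where $C_0 = \int_0^1\frac{\theta^{\frac{1}{2}-H}-1}{(1-\theta)^{\frac{1}{2}+H}}d\theta$, $C_1=\frac{1}{\Gamma(\frac{3}{2}-H)}(1+C_0(H-\frac{1}{2}))(K_1+\frac{1}{T})|y|$, $C_2=\frac{1}{\Gamma(\frac{3}{2}-H)}\frac{H-\frac{1}{2}}{\frac{3}{2}-H}\frac{Td_1K_2+K_2|y|\epsilon+K_1}{T}|y|$, $C_3=\frac{1}{\Gamma(\frac{3}{2}-H)}\frac{H-\frac{1}{2}}{\frac{3}{2}-H}d_2K_2|y|$, $C_4=\frac{1}{\Gamma(\frac{3}{2}-H)}\frac{H-\frac{1}{2}}{\frac{1}{2}-\delta}K_2|y|$. -/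

import Mathlib

open MeasureTheory Set

/-- The sup norm `‖f‖_∞ = sup_{0 ≤ t ≤ T} |f t|` of a path on `[0,T]`. -/
noncomputable def supN {E : Type*} [NormedAddCommGroup E] (T : ℝ) (f : ℝ → E) : ℝ :=
  ⨆ t : Icc (0:ℝ) T, ‖f (t : ℝ)‖

/-- The `λ`-Hölder seminorm `‖f‖_λ = sup_{0 ≤ s < t ≤ T} |f t - f s| / (t-s)^λ` of a path on
`[0,T]` (the diagonal pairs contribute `0/0 = 0`, so the supremum is unchanged). -/
noncomputable def holderN {E : Type*} [NormedAddCommGroup E] (T lam : ℝ) (f : ℝ → E) : ℝ :=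
  ⨆ p : Icc (0:ℝ) T × Icc (0:ℝ) T, ‖f (p.2 : ℝ) - f (p.1 : ℝ)‖ / |(p.2 : ℝ) - (p.1 : ℝ)| ^ lam

/-!
The three terms of `Φ(s)` are estimated separately. Since `|X^ε - X| ≤ ε |y|`, the mean value
theorem gives `|η| ≤ (K₁ + 1/T) ε |y|`. Writing `η_t - η_r` as a first difference of `b` in the
shift plus a second difference of `b` (controlled by `K₂`) bounds the increments of `η` by a
Lipschitz part in `|t - r|` plus `K₂ ε |y| ‖B‖_{H-δ} |t - r|^{H-δ}`. The substitution `r = sθ`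
turns the middle integral into `s^{1-2H} C₀` times the bound on `η`; its kernel is integrable
because `θ^{1/2-H} - 1 ≤ θ^{1/2-H} (1 - θ)`. The last integral is dominated by explicit integrals
of powers of `s - r`.
-/

theorem abs_sub_le_of_abs_deriv_le {f : ℝ → ℝ} {C : ℝ} (hf : Differentiable ℝ f)
    (hC : ∀ x, |deriv f x| ≤ C) (x y : ℝ) : |f x - f y| ≤ C * |x - y| := by
  simpa only [Real.norm_eq_abs] using Convex.norm_image_sub_le_of_norm_deriv_le (s := univ)
    (fun z _ => hf z) (fun z _ => hC z) convex_univ (mem_univ y) (mem_univ x)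

theorem abs_sub_sub_sub_le_of_lipschitz_deriv {b : ℝ → ℝ} {K₂ : ℝ} (hb : Differentiable ℝ b)
    (hb2 : ∀ u v, |deriv b u - deriv b v| ≤ K₂ * |u - v|) (h x x' : ℝ) :
    |(b x - b (x + h)) - (b x' - b (x' + h))| ≤ K₂ * |h| * |x - x'| := by
  have hg : ∀ z, HasDerivAt (fun z => b z - b (z + h)) (deriv b z - deriv b (z + h)) z :=
    fun z => (hb z).hasDerivAt.sub ((hb (z + h)).hasDerivAt.comp_add_const z h)
  refine abs_sub_le_of_abs_deriv_le (fun z => (hg z).differentiableAt) (fun z => ?_) x x'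
  rw [(hg z).deriv]
  simpa using hb2 z (z + h)

theorem abs_sub_sub_sub_le_of_bounded_lipschitz_deriv {b : ℝ → ℝ} {K₁ K₂ : ℝ}
    (hb : Differentiable ℝ b) (hb1 : ∀ u, |deriv b u| ≤ K₁)
    (hb2 : ∀ u v, |deriv b u - deriv b v| ≤ K₂ * |u - v|) (x x' h h' : ℝ) :
    |(b x - b (x + h)) - (b x' - b (x' + h'))| ≤ K₁ * |h - h'| + K₂ * |h'| * |x - x'| := by
  have hshift := abs_sub_le_of_abs_deriv_le hb hb1 (x + h') (x + h)
  rw [add_sub_add_left_eq_sub, abs_sub_comm h'] at hshift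
  calc |(b x - b (x + h)) - (b x' - b (x' + h'))|
      = |(b (x + h') - b (x + h)) + ((b x - b (x + h')) - (b x' - b (x' + h')))| := by ring_nf
    _ ≤ K₁ * |h - h'| + K₂ * |h'| * |x - x'| :=
      (abs_add_le _ _).trans
        (add_le_add hshift (abs_sub_sub_sub_le_of_lipschitz_deriv hb hb2 h' x x'))

theorem holderN_nonneg {E : Type*} [NormedAddCommGroup E] (T lam : ℝ) (f : ℝ → E) :
    0 ≤ holderN T lam f :=
  Real.iSup_nonneg fun _ => div_nonneg (norm_nonneg _) (Real.rpow_nonneg (abs_nonneg _) _)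

theorem abs_sub_le_holderN {T lam : ℝ} {f : ℝ → ℝ}
    (hf : BddAbove (range fun p : Icc (0:ℝ) T × Icc (0:ℝ) T =>
      |f (p.2 : ℝ) - f (p.1 : ℝ)| / |(p.2 : ℝ) - (p.1 : ℝ)| ^ lam))
    {r t : ℝ} (hr : r ∈ Icc 0 T) (ht : t ∈ Icc 0 T) :
    |f t - f r| ≤ holderN T lam f * |t - r| ^ lam := by
  rcases eq_or_ne t r with rfl | htr
  · simpa using mul_nonneg (holderN_nonneg T lam f) (Real.rpow_nonneg le_rfl lam)
  · rw [← div_le_iff₀ (Real.rpow_pos_of_pos (abs_pos.2 (sub_ne_zero.2 htr)) _)]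
    exact le_ciSup hf (⟨⟨r, hr⟩, ⟨t, ht⟩⟩ : Icc (0:ℝ) T × Icc (0:ℝ) T)

/-- The integrand of `C₀`. -/
noncomputable def driftKernel (H θ : ℝ) : ℝ :=
  (θ ^ ((1:ℝ)/2 - H) - 1) / (1 - θ) ^ ((1:ℝ)/2 + H)

section DriftKernel

variable {H θ : ℝ}

theorem driftKernel_nonneg (hH : 1/2 ≤ H) (hθ : θ ∈ Ioc 0 1) : 0 ≤ driftKernel H θ :=
  div_nonneg (sub_nonneg.2 (Real.one_le_rpow_of_pos_of_le_one_of_nonpos hθ.1 hθ.2 (by linarith)))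
    (Real.rpow_nonneg (sub_nonneg.2 hθ.2) _)

theorem rpow_mul_one_sub_rpow_le {a : ℝ} (ha : a ≤ 0) (hθ : θ ∈ Ioo 0 1) :
    θ ^ a * (1 - θ) ^ a ≤ 2 ^ (-a) * (θ ^ a + (1 - θ) ^ a) := by
  have half_pow : ((1:ℝ)/2) ^ a = 2 ^ (-a) := by
    rw [one_div, Real.inv_rpow zero_le_two, Real.rpow_neg zero_le_two]
  have hx := Real.rpow_nonneg hθ.1.le a
  have hy := Real.rpow_nonneg (sub_pos.2 hθ.2).le a
  rcases le_total θ (1/2) with h | h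
  · have : (1 - θ) ^ a ≤ 2 ^ (-a) :=
      half_pow ▸ Real.rpow_le_rpow_of_nonpos (by norm_num) (by linarith) ha
    nlinarith [mul_le_mul_of_nonneg_left this hx]
  · have : θ ^ a ≤ 2 ^ (-a) := half_pow ▸ Real.rpow_le_rpow_of_nonpos (by norm_num) h ha
    nlinarith [mul_le_mul_of_nonneg_right this hy]

theorem driftKernel_le (hH₁ : 1/2 ≤ H) (hH₂ : H < 3/2) (hθ : θ ∈ Ioc 0 1) :
    driftKernel H θ ≤ 2 ^ (H - 1/2) * (θ ^ ((1:ℝ)/2 - H) + (1 - θ) ^ ((1:ℝ)/2 - H)) := by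
  have hθ₀ := hθ.1
  rcases eq_or_lt_of_le hθ.2 with rfl | hθ₁
  · simp only [driftKernel, Real.one_rpow, sub_self, zero_div]
    positivity
  have hθ' : 0 < 1 - θ := sub_pos.2 hθ₁
  have hnum : θ ^ ((1:ℝ)/2 - H) - 1 ≤ θ ^ ((1:ℝ)/2 - H) * (1 - θ) := by
    have hle : θ ≤ θ ^ (H - 1/2) := by
      simpa using Real.rpow_le_rpow_of_exponent_ge hθ₀ hθ₁.le (by linarith : H - 1/2 ≤ 1)
    have hinv : θ ^ ((1:ℝ)/2 - H) * θ ^ (H - 1/2) = 1 := by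
      rw [← Real.rpow_add hθ₀]; norm_num
    nlinarith [mul_le_mul_of_nonneg_left hle (Real.rpow_nonneg hθ₀.le ((1:ℝ)/2 - H))]
  have hden : (1 - θ) ^ ((1:ℝ)/2 + H) = (1 - θ) * (1 - θ) ^ (-((1:ℝ)/2 - H)) := by
    rw [← Real.rpow_one_add' hθ'.le (by linarith)]; ring_nf
  calc driftKernel H θ ≤ θ ^ ((1:ℝ)/2 - H) * (1 - θ) / (1 - θ) ^ ((1:ℝ)/2 + H) :=
        div_le_div_of_nonneg_right hnum (Real.rpow_nonneg hθ'.le _)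
    _ = θ ^ ((1:ℝ)/2 - H) * (1 - θ) ^ ((1:ℝ)/2 - H) := by
        rw [hden, Real.rpow_neg hθ'.le]; field_simp
    _ ≤ 2 ^ (H - 1/2) * (θ ^ ((1:ℝ)/2 - H) + (1 - θ) ^ ((1:ℝ)/2 - H)) := by
        simpa using rpow_mul_one_sub_rpow_le (by linarith : (1:ℝ)/2 - H ≤ 0) ⟨hθ₀, hθ₁⟩

theorem intervalIntegrable_driftKernel (hH₁ : 1/2 ≤ H) (hH₂ : H < 3/2) :
    IntervalIntegrable (driftKernel H) volume 0 1 := by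
  have hp : (-1:ℝ) < 1/2 - H := by linarith
  have hdom : IntervalIntegrable
      (fun θ : ℝ => 2 ^ (H - 1/2) * (θ ^ ((1:ℝ)/2 - H) + (1 - θ) ^ ((1:ℝ)/2 - H))) volume 0 1 :=
    ((intervalIntegral.intervalIntegrable_rpow' hp).add (by
      simpa using (intervalIntegral.intervalIntegrable_rpow' hp (a := 1) (b := 0)).comp_sub_left 1)
      ).const_mul _
  have hmeas : Measurable (driftKernel H) := by unfold driftKernel; fun_prop
  refine hdom.mono_fun hmeas.aestronglyMeasurable ?_
  filter_upwards [ae_restrict_mem measurableSet_uIoc] with θ hθ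
  rw [uIoc_of_le zero_le_one] at hθ
  rw [Real.norm_of_nonneg (driftKernel_nonneg hH₁ hθ), Real.norm_eq_abs]
  exact (driftKernel_le hH₁ hH₂ hθ).trans (le_abs_self _)

theorem rpow_sub_rpow_div_eq_driftKernel {s r : ℝ} (hs : 0 < s) (hr : r ∈ Icc 0 s) :
    (r ^ ((1:ℝ)/2 - H) - s ^ ((1:ℝ)/2 - H)) / (s - r) ^ ((1:ℝ)/2 + H)
      = s ^ (-(2 * H)) * driftKernel H (r / s) := by
  have hθ₀ : 0 ≤ r / s := div_nonneg hr.1 hs.le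
  have hθ₁ : 0 ≤ 1 - r / s := by rw [sub_nonneg, div_le_one hs]; exact hr.2
  have hr' : r = s * (r / s) := by field_simp
  have hsr : s - r = s * (1 - r / s) := by field_simp
  rw [hsr, Real.mul_rpow hs.le hθ₁]
  nth_rewrite 1 [hr']
  rw [Real.mul_rpow hs.le hθ₀, driftKernel, ← mul_sub_one, mul_div_mul_comm, ← Real.rpow_sub hs]
  ring_nf

theorem intervalIntegrable_driftKernel_div (hH₁ : 1/2 ≤ H) (hH₂ : H < 3/2) (s : ℝ) :
    IntervalIntegrable (fun r => driftKernel H (r / s)) volume 0 s := by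
  simpa [div_eq_mul_inv] using (intervalIntegrable_driftKernel hH₁ hH₂).comp_mul_right (c := s⁻¹)

theorem integral_driftKernel_div {s : ℝ} (hs : 0 < s) :
    ∫ r in (0:ℝ)..s, driftKernel H (r / s) = s * ∫ θ in (0:ℝ)..1, driftKernel H θ := by
  rw [intervalIntegral.integral_comp_div _ hs.ne', zero_div, div_self hs.ne', smul_eq_mul]

end DriftKernel

theorem abs_integral_rpow_sub_div_mul_le {H s M : ℝ} {η : ℝ → ℝ} (hH₁ : 1/2 ≤ H) (hH₂ : H < 3/2)
    (hs : 0 < s) (hM : ∀ r ∈ Ioc 0 s, |η r| ≤ M) :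
    |∫ r in (0:ℝ)..s,
        (s ^ ((1:ℝ)/2 - H) - r ^ ((1:ℝ)/2 - H)) / (s - r) ^ ((1:ℝ)/2 + H) * η r|
      ≤ M * s ^ (1 - 2 * H) * ∫ θ in (0:ℝ)..1, driftKernel H θ := by
  have hbound : ∀ᵐ r, r ∈ Ioc 0 s →
      ‖(s ^ ((1:ℝ)/2 - H) - r ^ ((1:ℝ)/2 - H)) / (s - r) ^ ((1:ℝ)/2 + H) * η r‖
        ≤ M * (s ^ (-(2 * H)) * driftKernel H (r / s)) := by
    refine Filter.Eventually.of_forall fun r hr => ?_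
    have hθ : r / s ∈ Ioc 0 1 := ⟨div_pos hr.1 hs, (div_le_one hs).2 hr.2⟩
    have hk : 0 ≤ s ^ (-(2 * H)) * driftKernel H (r / s) :=
      mul_nonneg (Real.rpow_nonneg hs.le _) (driftKernel_nonneg hH₁ hθ)
    rw [← neg_sub, neg_div, rpow_sub_rpow_div_eq_driftKernel hs (Ioc_subset_Icc_self hr),
      norm_mul, norm_neg, Real.norm_of_nonneg hk, Real.norm_eq_abs, mul_comm]
    exact mul_le_mul_of_nonneg_right (hM r hr) hk
  have hint := ((intervalIntegrable_driftKernel_div hH₁ hH₂ s).const_mul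
    (s ^ (-(2 * H)))).const_mul M
  refine (intervalIntegral.norm_integral_le_of_norm_le hs.le hbound hint).trans_eq ?_
  rw [intervalIntegral.integral_const_mul, intervalIntegral.integral_const_mul,
    integral_driftKernel_div hs, sub_eq_add_neg, Real.rpow_add hs, Real.rpow_one]
  ring

theorem intervalIntegrable_sub_rpow {p : ℝ} (hp : -1 < p) (s : ℝ) :
    IntervalIntegrable (fun r => (s - r) ^ p) volume 0 s := by
  simpa using (intervalIntegral.intervalIntegrable_rpow' hp (a := s) (b := 0)).comp_sub_left s

theorem integral_sub_rpow {p : ℝ} (hp : -1 < p) (s : ℝ) :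
    ∫ r in (0:ℝ)..s, (s - r) ^ p = s ^ (p + 1) / (p + 1) := by
  rw [intervalIntegral.integral_comp_sub_left (fun x => x ^ p), sub_self, sub_zero,
    integral_rpow (Or.inl hp), Real.zero_rpow (by linarith), sub_zero]

theorem abs_integral_sub_div_rpow_le {η : ℝ → ℝ} {s c γ A D : ℝ} (hs : 0 < s) (hc : c < 2)
    (hγ : c - 1 < γ) (hinc : ∀ r ∈ Ioo 0 s, |η s - η r| ≤ A * (s - r) + D * (s - r) ^ γ) :
    |∫ r in (0:ℝ)..s, (η s - η r) / (s - r) ^ c|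
      ≤ A * (s ^ (2 - c) / (2 - c)) + D * (s ^ (γ - c + 1) / (γ - c + 1)) := by
  have hp₁ : -1 < 1 - c := by linarith
  have hp₂ : -1 < γ - c := by linarith
  have hbound : ∀ᵐ r, r ∈ Ioc 0 s →
      ‖(η s - η r) / (s - r) ^ c‖ ≤ A * (s - r) ^ (1 - c) + D * (s - r) ^ (γ - c) := by
    filter_upwards [Measure.ae_ne volume s] with r hrs hr
    have hpos : 0 < s - r := sub_pos.2 (lt_of_le_of_ne hr.2 hrs)
    rw [Real.norm_eq_abs, abs_div, abs_of_pos (Real.rpow_pos_of_pos hpos c),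
      div_le_iff₀ (Real.rpow_pos_of_pos hpos c), add_mul, mul_assoc, mul_assoc,
      ← Real.rpow_add hpos, ← Real.rpow_add hpos, sub_add_cancel, Real.rpow_one, sub_add_cancel]
    exact hinc r ⟨hr.1, lt_of_le_of_ne hr.2 hrs⟩
  have hint := ((intervalIntegrable_sub_rpow hp₁ s).const_mul A).add
    ((intervalIntegrable_sub_rpow hp₂ s).const_mul D)
  refine (intervalIntegral.norm_integral_le_of_norm_le hs.le hbound hint).trans_eq ?_
  rw [intervalIntegral.integral_add ((intervalIntegrable_sub_rpow hp₁ s).const_mul A)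
      ((intervalIntegrable_sub_rpow hp₂ s).const_mul D),
    intervalIntegral.integral_const_mul, intervalIntegral.integral_const_mul,
    integral_sub_rpow hp₁, integral_sub_rpow hp₂, show 1 - c + 1 = 2 - c by ring]

/-- The paper's `Φ(s) = (K_H⁻¹ ∫_0^· η_r dr)(s)` for `H > 1/2`. -/
noncomputable def girsanovDrift (H : ℝ) (η : ℝ → ℝ) (s : ℝ) : ℝ :=
  (1 / Real.Gamma (3/2 - H)) *
    (s ^ ((1:ℝ)/2 - H) * η s
      + (H - 1/2) * s ^ (H - (1:ℝ)/2) *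
        (∫ r in (0:ℝ)..s,
          (s ^ ((1:ℝ)/2 - H) - r ^ ((1:ℝ)/2 - H)) / (s - r) ^ ((1:ℝ)/2 + H) * η r)
      + (H - 1/2) * ∫ r in (0:ℝ)..s, (η s - η r) / (s - r) ^ ((1:ℝ)/2 + H))

theorem abs_girsanovDrift_le {H γ s M A D : ℝ} {η : ℝ → ℝ} (hH₁ : 1/2 ≤ H) (hH₂ : H < 3/2)
    (hγ : H - 1/2 < γ) (hs : 0 < s) (hM : ∀ r ∈ Ioc 0 s, |η r| ≤ M)
    (hinc : ∀ r ∈ Ioo 0 s, |η s - η r| ≤ A * (s - r) + D * (s - r) ^ γ) :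
    |girsanovDrift H η s| ≤ (1 / Real.Gamma (3/2 - H)) *
      ((1 + (∫ θ in (0:ℝ)..1, driftKernel H θ) * (H - 1/2)) * M * s ^ ((1:ℝ)/2 - H)
        + (H - 1/2) * (A * (s ^ ((3:ℝ)/2 - H) / (3/2 - H))
          + D * (s ^ (γ + 1/2 - H) / (γ + 1/2 - H)))) := by
  have hΓ : 0 < 1 / Real.Gamma (3/2 - H) := one_div_pos.2 (Real.Gamma_pos_of_pos (by linarith))
  have hH : 0 ≤ H - 1/2 := by linarith
  have hpow : s ^ (H - (1:ℝ)/2) * s ^ (1 - 2 * H) = s ^ ((1:ℝ)/2 - H) := by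
    rw [← Real.rpow_add hs]; ring_nf
  have hfirst : |s ^ ((1:ℝ)/2 - H) * η s| ≤ s ^ ((1:ℝ)/2 - H) * M := by
    rw [abs_mul, abs_of_nonneg (Real.rpow_nonneg hs.le _)]
    exact mul_le_mul_of_nonneg_left (hM s ⟨hs, le_rfl⟩) (Real.rpow_nonneg hs.le _)
  have hmiddle := abs_integral_rpow_sub_div_mul_le hH₁ hH₂ hs hM
  have hlast := abs_integral_sub_div_rpow_le (c := 1/2 + H) hs (by linarith) (by linarith) hinc
  rw [show (2:ℝ) - (1/2 + H) = 3/2 - H by ring, show γ - (1/2 + H) + 1 = γ + 1/2 - H by ring]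
    at hlast
  have hsecond : |(H - 1/2) * s ^ (H - (1:ℝ)/2) * ∫ r in (0:ℝ)..s,
        (s ^ ((1:ℝ)/2 - H) - r ^ ((1:ℝ)/2 - H)) / (s - r) ^ ((1:ℝ)/2 + H) * η r|
      ≤ (H - 1/2) * s ^ (H - (1:ℝ)/2)
          * (M * s ^ (1 - 2 * H) * ∫ θ in (0:ℝ)..1, driftKernel H θ) := by
    rw [abs_mul, abs_of_nonneg (by positivity)]
    exact mul_le_mul_of_nonneg_left hmiddle (by positivity)
  have hthird : |(H - 1/2) * ∫ r in (0:ℝ)..s, (η s - η r) / (s - r) ^ ((1:ℝ)/2 + H)|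
      ≤ (H - 1/2) * (A * (s ^ ((3:ℝ)/2 - H) / (3/2 - H))
          + D * (s ^ (γ + 1/2 - H) / (γ + 1/2 - H))) := by
    rw [abs_mul, abs_of_nonneg hH]
    exact mul_le_mul_of_nonneg_left hlast hH
  rw [girsanovDrift, abs_mul, abs_of_pos hΓ]
  refine (mul_le_mul_of_nonneg_left ((abs_add_three _ _ _).trans
    (add_le_add (add_le_add hfirst hsecond) hthird)) hΓ.le).trans_eq ?_
  rw [← hpow]; ring

theorem abs_shift_le {T ε y t : ℝ} (hT : 0 < T) (hε : 0 < ε) (ht : t ∈ Icc 0 T) :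
    |(T - t) / T * ε * y| ≤ ε * |y| := by
  have hc : |(T - t) / T| ≤ 1 := by
    rw [abs_le, le_div_iff₀ hT, div_le_one hT]; constructor <;> linarith [ht.1, ht.2]
  rw [abs_mul, abs_mul, abs_of_pos hε, mul_assoc]
  exact mul_le_of_le_one_left (by positivity) hc

section DriftDiff

variable {T ε y K₁ K₂ : ℝ} {b X η : ℝ → ℝ}

theorem abs_driftDiff_le (hT : 0 < T) (hε : 0 < ε) (hK₁ : 0 ≤ K₁)
    (hb : Differentiable ℝ b) (hb1 : ∀ u, |deriv b u| ≤ K₁)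
    (hη : ∀ t, η t = b (X t) - b (X t + (T - t) / T * ε * y) - ε / T * y)
    {t : ℝ} (ht : t ∈ Icc 0 T) : |η t| ≤ (K₁ + 1 / T) * (ε * |y|) := by
  have hb' := abs_sub_le_of_abs_deriv_le hb hb1 (X t) (X t + (T - t) / T * ε * y)
  rw [sub_add_cancel_left, abs_neg] at hb'
  have hdrift : |ε / T * y| = ε * |y| / T := by
    rw [abs_mul, abs_div, abs_of_pos hε, abs_of_pos hT]; ring
  calc |η t| ≤ |b (X t) - b (X t + (T - t) / T * ε * y)| + |ε / T * y| := by
        rw [hη]; exact abs_sub _ _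
    _ ≤ K₁ * (ε * |y|) + ε * |y| / T :=
        add_le_add (hb'.trans (mul_le_mul_of_nonneg_left (abs_shift_le hT hε ht) hK₁))
          hdrift.le
    _ = (K₁ + 1 / T) * (ε * |y|) := by ring

theorem abs_driftDiff_sub_le (hT : 0 < T) (hε : 0 < ε) (hK₂ : 0 ≤ K₂)
    (hb : Differentiable ℝ b) (hb1 : ∀ u, |deriv b u| ≤ K₁)
    (hb2 : ∀ u v, |deriv b u - deriv b v| ≤ K₂ * |u - v|)
    (hη : ∀ t, η t = b (X t) - b (X t + (T - t) / T * ε * y) - ε / T * y)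
    (t : ℝ) {r : ℝ} (hr : r ∈ Icc 0 T) :
    |η t - η r| ≤ K₁ * (ε * |y| / T) * |t - r| + K₂ * (ε * |y|) * |X t - X r| := by
  have hshift : |(T - t) / T * ε * y - (T - r) / T * ε * y| = ε * |y| / T * |t - r| := by
    rw [show (T - t) / T * ε * y - (T - r) / T * ε * y = -((t - r) * (ε * y / T)) by ring,
      abs_neg, abs_mul, abs_div, abs_mul, abs_of_pos hε, abs_of_pos hT]; ring
  have h := abs_sub_sub_sub_le_of_bounded_lipschitz_deriv hb hb1 hb2 (X t) (X r)
    ((T - t) / T * ε * y) ((T - r) / T * ε * y)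
  rw [hshift] at h
  calc |η t - η r|
      ≤ K₁ * (ε * |y| / T * |t - r|) + K₂ * |(T - r) / T * ε * y| * |X t - X r| := by
        rw [hη, hη, sub_sub_sub_cancel_right]; exact h
    _ ≤ K₁ * (ε * |y| / T) * |t - r| + K₂ * (ε * |y|) * |X t - X r| := by
        rw [← mul_assoc]; gcongr; exact abs_shift_le hT hε hr

theorem abs_driftDiff_sub_le_of_holder (hT : 0 < T) (hε : 0 < ε) (hK₂ : 0 ≤ K₂)
    (hb : Differentiable ℝ b) (hb1 : ∀ u, |deriv b u| ≤ K₁)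
    (hb2 : ∀ u v, |deriv b u - deriv b v| ≤ K₂ * |u - v|)
    (hη : ∀ t, η t = b (X t) - b (X t + (T - t) / T * ε * y) - ε / T * y)
    {d₁ d₂ W N γ : ℝ} {B : ℝ → ℝ}
    (hX : ∀ s ∈ Icc (0:ℝ) T, ∀ t ∈ Icc (0:ℝ) T,
      |X t - X s| ≤ d₁ * |t - s| + d₂ * W * |t - s| + |B t - B s|)
    (hB : ∀ r ∈ Icc (0:ℝ) T, ∀ t ∈ Icc (0:ℝ) T, |B t - B r| ≤ N * |t - r| ^ γ)
    {r s : ℝ} (hr : r ∈ Icc 0 T) (hs : s ∈ Icc 0 T) (hrs : r < s) :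
    |η s - η r| ≤ ((T * d₁ * K₂ + K₂ * |y| * ε + K₁) / T + d₂ * K₂ * W) * (ε * |y|) * (s - r)
      + K₂ * (ε * |y|) * N * (s - r) ^ γ := by
  have hsr : 0 < s - r := sub_pos.2 hrs
  have hX' := (hX r hr s hs).trans (add_le_add_right (hB r hr s hs) _)
  have hη' := abs_driftDiff_sub_le hT hε hK₂ hb hb1 hb2 hη s hr
  rw [abs_of_pos hsr] at hX' hη'
  -- `C₂` carries the extra nonnegative term `K₂ |y| ε / T`
  have hslack : 0 ≤ K₂ * |y| * ε / T * (ε * |y|) * (s - r) := by positivity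
  calc |η s - η r|
      ≤ K₁ * (ε * |y| / T) * (s - r)
        + K₂ * (ε * |y|) * (d₁ * (s - r) + d₂ * W * (s - r) + N * (s - r) ^ γ) :=
        hη'.trans (by gcongr)
    _ ≤ _ := by
        rw [← sub_nonneg]; convert hslack using 1; field_simp; ring

end DriftDiff

theorem stmt_8_general (T H δ ε y K₁ K₂ d₁ d₂ C₀ C₁ C₂ C₃ C₄ : ℝ)
    (hT : 0 < T) (hH : H ∈ Ioo (1/2 : ℝ) 1) (hδ : δ ∈ Ioo (0:ℝ) (1/2))
    (hε : 0 < ε) (hK₁ : 0 ≤ K₁) (hK₂ : 0 ≤ K₂)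
    (b : ℝ → ℝ) (hb : Differentiable ℝ b)
    (hb1 : ∀ u, |deriv b u| ≤ K₁) (hb2 : ∀ u v, |deriv b u - deriv b v| ≤ K₂ * |u - v|)
    (B : ℝ → ℝ)
    (hBβ : BddAbove (Set.range fun p : Icc (0:ℝ) T × Icc (0:ℝ) T =>
      |B (p.2 : ℝ) - B (p.1 : ℝ)| / |(p.2 : ℝ) - (p.1 : ℝ)| ^ (H - δ)))
    (X : ℝ → ℝ)
    (hX : ∀ s ∈ Icc (0:ℝ) T, ∀ t ∈ Icc (0:ℝ) T,
      |X t - X s| ≤ d₁ * |t - s| + d₂ * supN T B * |t - s| + |B t - B s|)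
    (Xε η Φ : ℝ → ℝ)
    (hXε : ∀ t, Xε t = X t + ((T - t) / T) * ε * y)
    (hη : ∀ t, η t = b (X t) - b (Xε t) - (ε / T) * y)
    (hΦ : ∀ s ∈ Ioc (0:ℝ) T,
      Φ s = (1 / Real.Gamma (3/2 - H)) *
        (s ^ ((1:ℝ)/2 - H) * η s
          + (H - 1/2) * s ^ (H - (1:ℝ)/2) *
            (∫ r in (0:ℝ)..s,
              (s ^ ((1:ℝ)/2 - H) - r ^ ((1:ℝ)/2 - H)) / (s - r) ^ ((1:ℝ)/2 + H) * η r)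
          + (H - 1/2) * ∫ r in (0:ℝ)..s, (η s - η r) / (s - r) ^ ((1:ℝ)/2 + H)))
    (hC₀ : C₀ = ∫ θ in (0:ℝ)..1, (θ ^ ((1:ℝ)/2 - H) - 1) / (1 - θ) ^ ((1:ℝ)/2 + H))
    (hC₁ : C₁ = (1 / Real.Gamma (3/2 - H)) * (1 + C₀ * (H - 1/2)) * (K₁ + 1 / T) * |y|)
    (hC₂ : C₂ = (1 / Real.Gamma (3/2 - H)) * ((H - 1/2) / (3/2 - H)) *
      ((T * d₁ * K₂ + K₂ * |y| * ε + K₁) / T) * |y|)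
    (hC₃ : C₃ = (1 / Real.Gamma (3/2 - H)) * ((H - 1/2) / (3/2 - H)) * d₂ * K₂ * |y|)
    (hC₄ : C₄ = (1 / Real.Gamma (3/2 - H)) * ((H - 1/2) / (1/2 - δ)) * K₂ * |y|) :
    ∀ s ∈ Ioc (0:ℝ) T,
      |Φ s| ≤ C₁ * ε * s ^ ((1:ℝ)/2 - H) + C₂ * ε * s ^ ((3:ℝ)/2 - H)
        + C₃ * ε * s ^ ((3:ℝ)/2 - H) * supN T B
        + C₄ * ε * s ^ ((1:ℝ)/2 - δ) * holderN T (H - δ) B := by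
  intro s hs
  have hsT : Ioc 0 s ⊆ Icc 0 T := fun r hr => ⟨hr.1.le, hr.2.trans hs.2⟩
  have hη' : ∀ t, η t = b (X t) - b (X t + (T - t) / T * ε * y) - ε / T * y := fun t => by
    rw [hη, hXε]
  rw [hΦ s hs]
  refine (abs_girsanovDrift_le (by linarith [hH.1]) (by linarith [hH.2]) (by linarith [hδ.2]) hs.1
    (fun r hr => abs_driftDiff_le hT hε hK₁ hb hb1 hη' (hsT hr))
    (fun r hr => abs_driftDiff_sub_le_of_holder hT hε hK₂ hb hb1 hb2 hη' hX
      (fun r hr t ht => abs_sub_le_holderN hBβ hr ht)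
      (hsT (Ioo_subset_Ioc_self hr)) (hsT ⟨hs.1, le_rfl⟩) hr.2)).trans_eq ?_
  have hC₀' : C₀ = ∫ θ in (0:ℝ)..1, driftKernel H θ := hC₀
  rw [← hC₀', hC₁, hC₂, hC₃, hC₄, show H - δ + 1/2 - H = 1/2 - δ by ring]
  field_simp
  ring

/-- Pointwise bound `|Φ(s)| ≤ C₁ ε s^{1/2-H} + C₂ ε s^{3/2-H} + C₃ ε s^{3/2-H} ‖B‖_∞
+ C₄ ε s^{1/2-δ} ‖B‖_{H-δ}` for the Girsanov drift
`Φ(s) = (K_H^{-1} ∫_0^· η_r dr)(s)` in the proof of the Bismut derivative formula, `H > 1/2`. -/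
theorem stmt_8 (T H δ ε y K₁ K₂ d₁ d₂ C₀ C₁ C₂ C₃ C₄ : ℝ)
    (hT : 0 < T) (hH : H ∈ Ioo (1/2 : ℝ) 1) (hδ : δ ∈ Ioo (0:ℝ) (1/2)) (hδH : δ < H)
    (hε : 0 < ε) (hK₁ : 0 ≤ K₁) (hK₂ : 0 ≤ K₂) (hd₁ : 0 ≤ d₁) (hd₂ : 0 ≤ d₂)
    (b : ℝ → ℝ) (hb : Differentiable ℝ b)
    (hb1 : ∀ u, |deriv b u| ≤ K₁) (hb2 : ∀ u v, |deriv b u - deriv b v| ≤ K₂ * |u - v|)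
    (B : ℝ → ℝ) (hBc : ContinuousOn B (Icc 0 T)) (hB0 : B 0 = 0)
    (hBβ : BddAbove (Set.range fun p : Icc (0:ℝ) T × Icc (0:ℝ) T =>
      |B (p.2 : ℝ) - B (p.1 : ℝ)| / |(p.2 : ℝ) - (p.1 : ℝ)| ^ (H - δ)))
    (X : ℝ → ℝ)
    (hX : ∀ s ∈ Icc (0:ℝ) T, ∀ t ∈ Icc (0:ℝ) T,
      |X t - X s| ≤ d₁ * |t - s| + d₂ * supN T B * |t - s| + |B t - B s|)
    (Xε η Φ : ℝ → ℝ)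
    (hXε : ∀ t, Xε t = X t + ((T - t) / T) * ε * y)
    (hη : ∀ t, η t = b (X t) - b (Xε t) - (ε / T) * y)
    (hΦ : ∀ s ∈ Ioc (0:ℝ) T,
      Φ s = (1 / Real.Gamma (3/2 - H)) *
        (s ^ ((1:ℝ)/2 - H) * η s
          + (H - 1/2) * s ^ (H - (1:ℝ)/2) *
            (∫ r in (0:ℝ)..s,
              (s ^ ((1:ℝ)/2 - H) - r ^ ((1:ℝ)/2 - H)) / (s - r) ^ ((1:ℝ)/2 + H) * η r)
          + (H - 1/2) * ∫ r in (0:ℝ)..s, (η s - η r) / (s - r) ^ ((1:ℝ)/2 + H)))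
    (hC₀ : C₀ = ∫ θ in (0:ℝ)..1, (θ ^ ((1:ℝ)/2 - H) - 1) / (1 - θ) ^ ((1:ℝ)/2 + H))
    (hC₁ : C₁ = (1 / Real.Gamma (3/2 - H)) * (1 + C₀ * (H - 1/2)) * (K₁ + 1 / T) * |y|)
    (hC₂ : C₂ = (1 / Real.Gamma (3/2 - H)) * ((H - 1/2) / (3/2 - H)) *
      ((T * d₁ * K₂ + K₂ * |y| * ε + K₁) / T) * |y|)
    (hC₃ : C₃ = (1 / Real.Gamma (3/2 - H)) * ((H - 1/2) / (3/2 - H)) * d₂ * K₂ * |y|)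
    (hC₄ : C₄ = (1 / Real.Gamma (3/2 - H)) * ((H - 1/2) / (1/2 - δ)) * K₂ * |y|) :
    ∀ s ∈ Ioc (0:ℝ) T,
      |Φ s| ≤ C₁ * ε * s ^ ((1:ℝ)/2 - H) + C₂ * ε * s ^ ((3:ℝ)/2 - H)
        + C₃ * ε * s ^ ((3:ℝ)/2 - H) * supN T B
        + C₄ * ε * s ^ ((1:ℝ)/2 - δ) * holderN T (H - δ) B :=
  stmt_8_general T H δ ε y K₁ K₂ d₁ d₂ C₀ C₁ C₂ C₃ C₄ hT hH hδ hε hK₁ hK₂ b hb hb1 hb2 B hBβ X hX Xε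
    η Φ hXε hη hΦ hC₀ hC₁ hC₂ hC₃ hC₄
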